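/- If G is a minimal graph of weak degeneracy d (meaning wd(G) = d and every proper subgraph H of G satisfies wd(H) < d), then every vertex of G has degree at least d. -/

import Mathlib

open Classical

/-- Removability of a set of remaining vertices by legal `Delete`/`DeleteSave` operations. -/
inductive SimpleGraph.WDRem {V : Type*} (G : SimpleGraph V) : Finset V → (V → ℤ) → Prop
  | empty (f : V → ℤ) : SimpleGraph.WDRem G ∅ f
  | delete (S : Finset V) (f : V → ℤ) (u : V) (hu : u ∈ S)
      (hleg : ∀ v ∈ S.erase u, 0 ≤ f v - (if G.Adj u v then 1 else 0))
      (h : SimpleGraph.WDRem G (S.erase u) (fun v => f v - (if G.Adj u v then 1 else 0))) :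
      SimpleGraph.WDRem G S f
  | deleteSave (S : Finset V) (f : V → ℤ) (u w : V) (hu : u ∈ S) (hw : w ∈ S)
      (hadj : G.Adj u w) (hsave : f w < f u)
      (hleg : ∀ v ∈ S.erase u, 0 ≤ f v - (if G.Adj u v ∧ v ≠ w then 1 else 0))
      (h : SimpleGraph.WDRem G (S.erase u)
        (fun v => f v - (if G.Adj u v ∧ v ≠ w then 1 else 0))) :
      SimpleGraph.WDRem G S f

/-- Removability by legal `Delete` operations only. -/
inductive SimpleGraph.DelRem {V : Type*} (G : SimpleGraph V) : Finset V → (V → ℤ) → Prop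
  | empty (f : V → ℤ) : SimpleGraph.DelRem G ∅ f
  | delete (S : Finset V) (f : V → ℤ) (u : V) (hu : u ∈ S)
      (hleg : ∀ v ∈ S.erase u, 0 ≤ f v - (if G.Adj u v then 1 else 0))
      (h : SimpleGraph.DelRem G (S.erase u) (fun v => f v - (if G.Adj u v then 1 else 0))) :
      SimpleGraph.DelRem G S f

/-- `G` is weakly `f`-degenerate. -/
def SimpleGraph.WeaklyDeg {V : Type*} [Fintype V] (G : SimpleGraph V) (f : V → ℤ) : Prop :=
  G.WDRem Finset.univ f

/-- The weak degeneracy `wd(G)`. -/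
noncomputable def SimpleGraph.wdeg {V : Type*} [Fintype V] (G : SimpleGraph V) : ℕ :=
  sInf {d : ℕ | G.WeaklyDeg fun _ => (d : ℤ)}

/-!
If a vertex `v` had degree below `d`, minimality would make `G - v` weakly `(d - 1)`-degenerate.
Replaying that removal sequence inside `G` is still legal: every removal of a neighbour of `v`
also lowers the value at `v` by one, so the value at `v` keeps dominating the number of its
remaining neighbours, which starts at `deg v ≤ d - 1`. Removing `v` last shows `wd(G) ≤ d - 1`.
-/

open Finset

namespace SimpleGraph

variable {V : Type*} {G : SimpleGraph V}

theorem WDRem.mono {S : Finset V} {f g : V → ℤ} (h : G.WDRem S f)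
    (hfg : ∀ v ∈ S, f v ≤ g v) : G.WDRem S g := by
  induction h generalizing g with
  | empty => exact .empty g
  | delete S f u hu hleg _ ih =>
    have hle : ∀ v ∈ S.erase u,
        f v - (if G.Adj u v then 1 else 0) ≤ g v - (if G.Adj u v then 1 else 0) :=
      fun v hv => by linarith [hfg v (mem_of_mem_erase hv)]
    exact .delete S g u hu (fun v hv => (hleg v hv).trans (hle v hv)) (ih hle)
  | deleteSave S f u w hu hw hadj hsave hleg _ ih =>
    by_cases hgw : g w < g u
    · have hle : ∀ v ∈ S.erase u, f v - (if G.Adj u v ∧ v ≠ w then 1 else 0)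
          ≤ g v - (if G.Adj u v ∧ v ≠ w then 1 else 0) :=
        fun v hv => by linarith [hfg v (mem_of_mem_erase hv)]
      exact .deleteSave S g u w hu hw hadj hgw (fun v hv => (hleg v hv).trans (hle v hv)) (ih hle)
    · -- Saving `w` is no longer legal, but `g w ≥ g u ≥ f u > f w` lets `w` pay for its edge.
      have hle : ∀ v ∈ S.erase u, f v - (if G.Adj u v ∧ v ≠ w then 1 else 0)
          ≤ g v - (if G.Adj u v then 1 else 0) := by
        intro v hv
        have hv' := hfg v (mem_of_mem_erase hv)
        by_cases hvw : v = w
        · subst hvw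
          simp only [hadj, ne_eq, not_true_eq_false, and_false, if_false, if_true]
          linarith [hfg u hu]
        · simp only [ne_eq, hvw, not_false_eq_true, and_true]
          linarith
      exact .delete S g u hu (fun v hv => (hleg v hv).trans (hle v hv)) (ih hle)

theorem card_filter_adj_eq_card_filter_adj_erase_add {S : Finset V} {u : V} (hu : u ∈ S)
    (v : V) :
    (#{x ∈ S | G.Adj x v} : ℤ) = #{x ∈ S.erase u | G.Adj x v} + if G.Adj u v then 1 else 0 := by
  rw [filter_erase]
  by_cases huv : G.Adj u v
  · rw [if_pos huv, ← card_erase_add_one (mem_filter.2 ⟨hu, huv⟩)]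
    push_cast
    rfl
  · rw [if_neg huv, erase_eq_of_notMem (by simp [huv]), add_zero]

theorem WDRem.insert_of_card_adj_le {S : Finset V} {f : V → ℤ} {v : V} (h : G.WDRem S f)
    (hv : v ∉ S) (hdeg : (#{x ∈ S | G.Adj x v} : ℤ) ≤ f v) : G.WDRem (insert v S) f := by
  induction h with
  | empty f => exact .delete {v} f v (mem_singleton_self v) (by simp) (by simpa using .empty _)
  | delete S f u hu hleg _ ih =>
    have hvu : v ≠ u := fun h => hv (h ▸ hu)
    have hcount := card_filter_adj_eq_card_filter_adj_erase_add (G := G) hu v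
    refine .delete _ f u (mem_insert_of_mem hu) ?_ ?_ <;> rw [erase_insert_of_ne hvu]
    · refine forall_mem_insert _ _ _ |>.2 ⟨?_, hleg⟩
      linarith [Int.natCast_nonneg #{x ∈ S.erase u | G.Adj x v}]
    · exact ih (fun h => hv (mem_of_mem_erase h)) (by linarith)
  | deleteSave S f u w hu hw hadj hsave hleg _ ih =>
    have hvu : v ≠ u := fun h => hv (h ▸ hu)
    have hsaved :
        (if G.Adj u v ∧ v ≠ w then (1 : ℤ) else 0) = if G.Adj u v then 1 else 0 := by
      simp [show v ≠ w from fun h => hv (h ▸ hw)]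
    have hcount := card_filter_adj_eq_card_filter_adj_erase_add (G := G) hu v
    refine .deleteSave _ f u w (mem_insert_of_mem hu) (mem_insert_of_mem hw) hadj hsave ?_ ?_ <;>
      rw [erase_insert_of_ne hvu]
    · refine forall_mem_insert _ _ _ |>.2 ⟨?_, hleg⟩
      rw [hsaved]
      linarith [Int.natCast_nonneg #{x ∈ S.erase u | G.Adj x v}]
    · exact ih (fun h => hv (mem_of_mem_erase h)) (by simp only [hsaved]; linarith)

theorem WDRem.of_card_le {S : Finset V} {f : V → ℤ} (hf : ∀ v ∈ S, (#S : ℤ) ≤ f v) :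
    G.WDRem S f := by
  induction S using Finset.induction_on with
  | empty => exact .empty f
  | insert a T ha ih =>
    have hcard : (#T : ℤ) + 1 = #(insert a T) := by simp [card_insert_of_notMem ha]
    refine (ih fun v hv => ?_).insert_of_card_adj_le ha ?_
    · linarith [hf v (mem_insert_of_mem hv)]
    · calc (#{x ∈ T | G.Adj x a} : ℤ) ≤ #T := by exact_mod_cast card_filter_le _ _
        _ ≤ f a := by linarith [hf a (mem_insert_self a T)]

theorem WDRem.map {W : Type*} {H : SimpleGraph W} (φ : H ↪g G) {S : Finset W} {f : W → ℤ}
    {g : V → ℤ} (h : H.WDRem S f) (hg : ∀ a ∈ S, g (φ a) = f a) :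
    G.WDRem (S.map φ.toEmbedding) g := by
  induction h generalizing g with
  | empty => exact .empty g
  | delete S f u hu hleg _ ih =>
    have herase : (S.map φ.toEmbedding).erase (φ u) = (S.erase u).map φ.toEmbedding :=
      (map_erase _ _ _).symm
    refine .delete _ g (φ u) (mem_map_of_mem _ hu) ?_ ?_ <;> rw [herase]
    · simp only [forall_mem_map]
      intro a ha
      simpa [hg a (mem_of_mem_erase ha)] using hleg a ha
    · exact ih fun a ha => by simp [hg a (mem_of_mem_erase ha)]
  | deleteSave S f u w hu hw hadj hsave hleg _ ih =>
    have herase : (S.map φ.toEmbedding).erase (φ u) = (S.erase u).map φ.toEmbedding :=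
      (map_erase _ _ _).symm
    refine .deleteSave _ g (φ u) (φ w) (mem_map_of_mem _ hu) (mem_map_of_mem _ hw)
      (φ.map_adj_iff.2 hadj) (by simpa [hg u hu, hg w hw] using hsave) ?_ ?_ <;> rw [herase]
    · simp only [forall_mem_map]
      intro a ha
      simpa [hg a (mem_of_mem_erase ha)] using hleg a ha
    · exact ih fun a ha => by simp [hg a (mem_of_mem_erase ha)]

section Fintype

variable [Fintype V]

theorem weaklyDeg_wdeg (G : SimpleGraph V) : G.WeaklyDeg fun _ => (G.wdeg : ℤ) :=
  Nat.sInf_mem (s := {d : ℕ | G.WeaklyDeg fun _ => (d : ℤ)})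
    ⟨Fintype.card V, WDRem.of_card_le fun v _ => by simp⟩

theorem wdeg_le_of_weaklyDeg {d : ℕ} (h : G.WeaklyDeg fun _ => (d : ℤ)) : G.wdeg ≤ d :=
  Nat.sInf_le h

theorem weaklyDeg_of_wdeg_le {d : ℕ} (h : G.wdeg ≤ d) : G.WeaklyDeg fun _ => (d : ℤ) :=
  G.weaklyDeg_wdeg.mono fun _ _ => by exact_mod_cast h

theorem weaklyDeg_of_weaklyDeg_deleteVerts {v : V} {c : ℕ}
    (h : ((⊤ : G.Subgraph).deleteVerts {v}).coe.WeaklyDeg fun _ => (c : ℤ))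
    (hv : G.degree v ≤ c) : G.WeaklyDeg fun _ => (c : ℤ) := by
  let φ : ((⊤ : G.Subgraph).deleteVerts {v}).coe ↪g G :=
    { toFun := (↑), inj' := Subtype.coe_injective, map_rel_iff' := by simp +contextual }
  have hrest : G.WDRem (univ.erase v) fun _ => (c : ℤ) := by
    convert WDRem.map φ h (g := fun _ => (c : ℤ)) fun _ _ => rfl
    ext x
    simp [φ]
  have hnbr : {x ∈ univ.erase v | G.Adj x v} ⊆ G.neighborFinset v := fun x hx => by
    simpa using (mem_filter.1 hx).2.symm
  have hins := hrest.insert_of_card_adj_le (notMem_erase v univ)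
    (by exact_mod_cast (card_le_card hnbr).trans ((card_neighborFinset_eq_degree G v).trans_le hv))
  rwa [insert_erase (mem_univ v)] at hins

end Fintype

end SimpleGraph

open SimpleGraph in
theorem minimal_wdeg_minDegree {V : Type*} [Fintype V] (G : SimpleGraph V) (d : ℕ)
    (hwd : G.wdeg = d) (hmin : ∀ H : G.Subgraph, H ≠ ⊤ → H.coe.wdeg < d) :
    ∀ v : V, d ≤ G.degree v := by
  intro v
  by_contra! hdeg
  set H : G.Subgraph := (⊤ : G.Subgraph).deleteVerts {v}
  have hH : H ≠ ⊤ := fun h => by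
    have hv : v ∈ H.verts := h ▸ trivial
    simp [H] at hv
  have hHd : H.coe.wdeg < d := hmin H hH
  have hG : G.wdeg ≤ d - 1 := wdeg_le_of_weaklyDeg <|
    weaklyDeg_of_weaklyDeg_deleteVerts (v := v)
      (weaklyDeg_of_wdeg_le (Nat.le_sub_one_of_lt hHd)) (Nat.le_sub_one_of_lt hdeg)
  omega
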